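/- arXiv:1802.02982 — 2 statements merged into one kernel-verified Lean document; each statement's English description precedes it below -/
import Mathlib

section
/- Let G be a nonempty simple 3-regular graph with girth at least 5 such that κ_{1/4}(x,y) = 0 (equivalently W_1(μ_x^{1/4}, μ_y^{1/4}) = 1) for every edge xy. Then the girth of G is exactly 5. -/
open scoped ENNReal

namespace RicciFlatCubic

variable {V : Type*}

/-- The probability measure `μ_x^p` on the vertex set: mass `p` at `x`,
mass `(1-p)/deg x` at each neighbor of `x`, and `0` elsewhere. -/
noncomputable def muMeasure (G : SimpleGraph V) [G.LocallyFinite] (p : ℝ≥0∞) (x : V) :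
    V → ℝ≥0∞ := fun z =>
  haveI : DecidableEq V := Classical.decEq V
  haveI : Decidable (G.Adj x z) := Classical.dec _
  if z = x then p
  else if G.Adj x z then (1 - p) / (G.degree x : ℝ≥0∞)
  else 0

/-- `π : V × V → [0,1]` is a transport plan from `μ₁` to `μ₂` if its marginals are `μ₁`, `μ₂`. -/
def IsTransportPlan (μ₁ μ₂ : V → ℝ≥0∞) (π : V → V → ℝ≥0∞) : Prop :=
  (∀ u v, π u v ≤ 1) ∧ (∀ u, ∑' v, π u v = μ₁ u) ∧ (∀ v, ∑' u, π u v = μ₂ v)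

/-- The Wasserstein distance `W₁(μ₁, μ₂)`: the infimum over all transport plans of the
transport cost `∑ d(u,v) π(u,v)`, where `d` is the shortest-path distance in `G`. -/
noncomputable def W1 (G : SimpleGraph V) (μ₁ μ₂ : V → ℝ≥0∞) : ℝ≥0∞ :=
  ⨅ π : {π : V → V → ℝ≥0∞ // IsTransportPlan μ₁ μ₂ π},
    ∑' q : V × V, (G.dist q.1 q.2 : ℝ≥0∞) * π.1 q.1 q.2

/-- The `p`-Ollivier-Ricci curvature `κ_p(x,y) = 1 - W₁(μ_x^p, μ_y^p)` (as a real number),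
for a real idleness parameter `p`. -/
noncomputable def kappa (G : SimpleGraph V) [G.LocallyFinite] (p : ℝ) (x y : V) : ℝ :=
  1 - (W1 G (muMeasure G (ENNReal.ofReal p) x) (muMeasure G (ENNReal.ofReal p) y)).toReal

/-- The edge `xy` lies on two 5-cycles whose vertex sets intersect exactly in `{x, y}`. -/
def TwoPentagons (G : SimpleGraph V) (x y : V) : Prop :=
  ∃ P₁ P₂ : G.Walk x x, P₁.IsCycle ∧ P₂.IsCycle ∧ P₁.length = 5 ∧ P₂.length = 5 ∧
    s(x, y) ∈ P₁.edges ∧ s(x, y) ∈ P₂.edges ∧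
    {v | v ∈ P₁.support} ∩ {v | v ∈ P₂.support} = {x, y}

/-- The Petersen graph as the Kneser graph `K(5,2)`. -/
def petersen : SimpleGraph {s : Finset (Fin 5) // s.card = 2} where
  Adj a b := Disjoint a.1 b.1
  symm := ⟨fun _ _ h => h.symm⟩
  loopless := ⟨by
    rintro ⟨s, hs⟩ h
    rw [disjoint_self] at h
    simp only [Finset.bot_eq_empty] at h
    simp [h] at hs⟩

/-- The Triplex: a 12-cycle on `ℤ/12ℤ` together with six chords. -/
def triplex : SimpleGraph (ZMod 12) :=
  SimpleGraph.fromRel fun i j =>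
    j = i + 1 ∨ (i = 1 ∧ j = 7) ∨ (i = 2 ∧ j = 10) ∨ (i = 3 ∧ j = 8) ∨
      (i = 4 ∧ j = 12) ∨ (i = 5 ∧ j = 9) ∨ (i = 6 ∧ j = 11)

/-- The dodecahedral graph: layer `0` is the outer 5-cycle `a`, layers `1`, `2` form the
middle 10-cycle `b₁ c₁ b₂ c₂ … b₅ c₅`, layer `3` is the inner 5-cycle `d`. -/
def dodecahedral : SimpleGraph (Fin 4 × ZMod 5) :=
  SimpleGraph.fromRel fun p q =>
    (p.1 = 0 ∧ q.1 = 0 ∧ q.2 = p.2 + 1) ∨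
    (p.1 = 0 ∧ q.1 = 1 ∧ q.2 = p.2) ∨
    (p.1 = 1 ∧ q.1 = 2 ∧ q.2 = p.2) ∨
    (p.1 = 2 ∧ q.1 = 1 ∧ q.2 = p.2 + 1) ∨
    (p.1 = 2 ∧ q.1 = 3 ∧ q.2 = p.2) ∨
    (p.1 = 3 ∧ q.1 = 3 ∧ q.2 = p.2 + 1)

/-- The half-dodecahedral graph: inner 5-cycle `y` (`Sum.inl`), outer 10-cycle `x`
(`Sum.inr`), and spokes `yᵢ ~ x_{2i-1}`. -/
def halfDodecahedral : SimpleGraph (ZMod 5 ⊕ ZMod 10) :=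
  SimpleGraph.fromRel fun p q =>
    (∃ i : ZMod 5, p = Sum.inl i ∧ q = Sum.inl (i + 1)) ∨
    (∃ j : ZMod 10, p = Sum.inr j ∧ q = Sum.inr (j + 1)) ∨
    (∃ i : ZMod 5, p = Sum.inl i ∧ q = Sum.inr (2 * (i.val : ZMod 10) - 1))

/-- The two-sided infinite path on `ℤ`. -/
def infinitePath : SimpleGraph ℤ := SimpleGraph.fromRel fun i j => j = i + 1

/-- The cycle `Cₙ` on `ℤ/nℤ`. -/
def cycleZMod (n : ℕ) : SimpleGraph (ZMod n) := SimpleGraph.fromRel fun i j => j = i + 1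

noncomputable instance (v : {s : Finset (Fin 5) // s.card = 2}) :
    Fintype (petersen.neighborSet v) := (Set.toFinite _).fintype

noncomputable instance (v : ZMod 12) : Fintype (triplex.neighborSet v) :=
  (Set.toFinite _).fintype

noncomputable instance (v : Fin 4 × ZMod 5) : Fintype (dodecahedral.neighborSet v) :=
  (Set.toFinite _).fintype

/-!
Suppose the girth is at least `6` and fix an edge `xy`. Let `f` be the graph distance to the
set `S` of the two neighbours of `y` other than `x`. It is `1`-Lipschitz, vanishes on `S`, and
is at least `3` at the two neighbours of `x` other than `y`, since a path of length at most `2`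
between them would close a cycle of length at most `5`. The easy half of Kantorovich duality then
gives `W₁(μ_x, μ_y) ≥ ∑ f μ_x - ∑ f μ_y = (3 + 3) / 4 > 1`, the masses at `x` and `y` cancelling.
-/

end RicciFlatCubic

namespace SimpleGraph

variable {V : Type*} {G : SimpleGraph V} {a b c d e u v x y : V}

theorem egirth_le_three (hab : G.Adj a b) (hbc : G.Adj b c) (hca : G.Adj c a) :
    G.egirth ≤ 3 := by
  have hcyc : (Walk.cons hab (Walk.cons hbc (Walk.cons hca Walk.nil))).IsCycle := by
    simp [Walk.isCycle_def, Walk.isTrail_def, hab.ne, hbc.ne, hca.ne, hab.ne', hca.ne']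
  simpa using egirth_le_length hcyc

theorem egirth_le_four (hab : G.Adj a b) (hbc : G.Adj b c) (hcd : G.Adj c d) (hda : G.Adj d a)
    (hac : a ≠ c) (hbd : b ≠ d) : G.egirth ≤ 4 := by
  have hcyc :
      (Walk.cons hab (Walk.cons hbc (Walk.cons hcd (Walk.cons hda Walk.nil)))).IsCycle := by
    simp [Walk.isCycle_def, Walk.isTrail_def, hab.ne, hbc.ne, hcd.ne, hda.ne, hab.ne', hda.ne',
      hac, hbd, hac.symm]
  simpa using egirth_le_length hcyc

theorem egirth_le_five (hab : G.Adj a b) (hbc : G.Adj b c) (hcd : G.Adj c d) (hde : G.Adj d e)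
    (hea : G.Adj e a) (hac : a ≠ c) (had : a ≠ d) (hbd : b ≠ d) (hbe : b ≠ e) (hce : c ≠ e) :
    G.egirth ≤ 5 := by
  have hcyc : (Walk.cons hab (Walk.cons hbc (Walk.cons hcd (Walk.cons hde
      (Walk.cons hea Walk.nil))))).IsCycle := by
    simp [Walk.isCycle_def, Walk.isTrail_def, hab.ne, hbc.ne, hcd.ne, hde.ne, hea.ne, hab.ne',
      hea.ne', hac, had, hbd, hbe, hce, hac.symm, had.symm]
  simpa using egirth_le_length hcyc

theorem three_le_dist_of_six_le_egirth (hg : 6 ≤ G.egirth) (hxy : G.Adj x y) (hxa : G.Adj x a)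
    (hyc : G.Adj y c) (hay : a ≠ y) (hcx : c ≠ x) : 3 ≤ G.dist a c := by
  have no_short_cycle : ∀ n : ℕ∞, n < 6 → ¬ G.egirth ≤ n := fun n hn h =>
    (h.trans_lt hn).not_ge hg
  have hac : a ≠ c := by
    rintro rfl
    exact no_short_cycle 3 (by norm_num) (egirth_le_three hxy hyc hxa.symm)
  have hnac : ¬ G.Adj a c := fun h =>
    no_short_cycle 4 (by norm_num) (egirth_le_four hxa.symm hxy hyc h.symm hay hcx.symm)
  have hnmid : G.commonNeighbors a c = ∅ := by
    refine Set.eq_empty_of_forall_notMem fun m hm => ?_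
    obtain ⟨ham, hcm⟩ := (G.mem_commonNeighbors).1 hm
    have hmx : m ≠ x := by
      rintro rfl
      exact no_short_cycle 3 (by norm_num) (egirth_le_three hxy hyc hcm)
    have hmy : m ≠ y := by
      rintro rfl
      exact no_short_cycle 3 (by norm_num) (egirth_le_three hxy ham.symm hxa.symm)
    exact no_short_cycle 5 (by norm_num)
      (egirth_le_five hxa.symm hxy hyc hcm ham.symm hay hac hcx.symm hmx.symm hmy.symm)
  have hreach : G.Reachable a c := hxa.symm.reachable.trans (hxy.reachable.trans hyc.reachable)
  have h2 : 2 < G.edist a c := two_lt_edist_iff.2 ⟨hac, hnac, hnmid⟩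
  rw [← hreach.coe_dist_eq_edist] at h2
  exact_mod_cast h2

theorem Reachable.biInf_dist_le (h : G.Reachable u v) (S : Set V) :
    ⨅ c ∈ S, (G.dist u c : ℝ≥0∞) ≤ (⨅ c ∈ S, (G.dist v c : ℝ≥0∞)) + G.dist u v := by
  rw [← tsub_le_iff_right]
  refine le_iInf₂ fun c hc => tsub_le_iff_right.2 ?_
  calc ⨅ c ∈ S, (G.dist u c : ℝ≥0∞) ≤ G.dist u c := iInf₂_le c hc
    _ ≤ G.dist v c + G.dist u v := by
      exact_mod_cast (h.dist_triangle_left c).trans_eq (add_comm _ _)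

end SimpleGraph

namespace RicciFlatCubic

variable {V : Type*}

theorem tsum_mul_le_tsum_mul_add_W1 (G : SimpleGraph V) {μ₁ μ₂ : V → ℝ≥0∞} (f : V → ℝ≥0∞)
    (hf : ∀ u v, μ₁ u ≠ 0 → μ₂ v ≠ 0 → f u ≤ f v + G.dist u v) :
    ∑' u, f u * μ₁ u ≤ ∑' v, f v * μ₂ v + W1 G μ₁ μ₂ := by
  rw [W1, ENNReal.add_iInf]
  refine le_iInf fun ⟨π, _, hπ₁, hπ₂⟩ => ?_
  have hsupp : ∀ u v, π u v ≠ 0 → μ₁ u ≠ 0 ∧ μ₂ v ≠ 0 := fun u v h =>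
    ⟨ne_bot_of_le_ne_bot h (hπ₁ u ▸ ENNReal.le_tsum v),
      ne_bot_of_le_ne_bot h (hπ₂ v ▸ ENNReal.le_tsum u)⟩
  calc ∑' u, f u * μ₁ u = ∑' q : V × V, f q.1 * π q.1 q.2 := by
        rw [ENNReal.tsum_prod']
        simp_rw [ENNReal.tsum_mul_left, hπ₁]
    _ ≤ ∑' q : V × V, (f q.2 * π q.1 q.2 + G.dist q.1 q.2 * π q.1 q.2) := by
        refine ENNReal.tsum_le_tsum fun q => ?_
        rcases eq_or_ne (π q.1 q.2) 0 with h | h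
        · simp [h]
        · rw [← add_mul]
          exact mul_le_mul_left (hf _ _ (hsupp _ _ h).1 (hsupp _ _ h).2) _
    _ = ∑' v, f v * μ₂ v + ∑' q : V × V, G.dist q.1 q.2 * π q.1 q.2 := by
        rw [ENNReal.tsum_add, ENNReal.tsum_prod', ENNReal.tsum_comm]
        simp_rw [ENNReal.tsum_mul_left, hπ₂]

section Measure

variable {G : SimpleGraph V} [G.LocallyFinite] {p : ℝ≥0∞} {x z : V}

theorem reachable_of_muMeasure_ne_zero (h : muMeasure G p x z ≠ 0) : G.Reachable x z := by
  by_cases hzx : z = x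
  · exact hzx ▸ SimpleGraph.Reachable.refl z
  by_cases hxz : G.Adj x z
  · exact hxz.reachable
  simp [muMeasure, hzx, hxz] at h

theorem tsum_mul_muMeasure (f : V → ℝ≥0∞) :
    ∑' z, f z * muMeasure G p x z =
      f x * p + ∑ z ∈ G.neighborFinset x, f z * ((1 - p) / G.degree x) := by
  classical
  rw [tsum_eq_sum (s := insert x (G.neighborFinset x)), Finset.sum_insert (by simp)]
  · congr 1
    · simp [muMeasure]
    · refine Finset.sum_congr rfl fun z hz => ?_
      have hxz := (G.mem_neighborFinset x z).1 hz
      simp [muMeasure, hxz, hxz.ne']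
  · intro z hz
    simp only [Finset.mem_insert, SimpleGraph.mem_neighborFinset, not_or] at hz
    simp [muMeasure, hz.1, hz.2]

theorem tsum_mul_muMeasure_quarter (hx : G.degree x = 3) (f : V → ℝ≥0∞) :
    ∑' z, f z * muMeasure G (1 / 4) x z = (f x + ∑ z ∈ G.neighborFinset x, f z) / 4 := by
  have hq : (1 - 1 / 4 : ℝ≥0∞) / (3 : ℕ) = 1 / 4 := by
    rw [ENNReal.div_eq_div_iff (by norm_num) (by norm_num) (by norm_num) (by norm_num),
      ENNReal.mul_sub (by simp), ENNReal.mul_div_cancel (by norm_num) (by norm_num), mul_one,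
      show (4 : ℝ≥0∞) = 3 + 1 by norm_num, ENNReal.add_sub_cancel_right ENNReal.one_ne_top]
    norm_num
  rw [tsum_mul_muMeasure, hx, hq, ← Finset.sum_mul, ← add_mul, mul_one_div]

end Measure

theorem three_div_two_le_W1 {G : SimpleGraph V} [G.LocallyFinite]
    (hreg : G.IsRegularOfDegree 3) (hg : 6 ≤ G.egirth) {x y : V} (hxy : G.Adj x y) :
    3 / 2 ≤ W1 G (muMeasure G (1 / 4) x) (muMeasure G (1 / 4) y) := by
  classical
  set A := (G.neighborFinset x).erase y
  set S := (G.neighborFinset y).erase x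
  set f : V → ℝ≥0∞ := fun z => ⨅ c ∈ S, (G.dist z c : ℝ≥0∞)
  have hyx : x ∈ G.neighborFinset y := (G.mem_neighborFinset y x).2 hxy.symm
  have hxy' : y ∈ G.neighborFinset x := (G.mem_neighborFinset x y).2 hxy
  obtain ⟨c₀, hc₀⟩ : S.Nonempty := by
    rw [← Finset.card_pos, Finset.card_erase_of_mem hyx, G.card_neighborFinset_eq_degree, hreg y]
    norm_num
  have hf_ne_top : ∀ z, f z ≠ ⊤ := fun z =>
    ne_top_of_le_ne_top (ENNReal.natCast_ne_top (G.dist z c₀)) (iInf₂_le c₀ hc₀)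
  have hfS : ∑ c ∈ S, f c = 0 := Finset.sum_eq_zero fun c hc =>
    nonpos_iff_eq_zero.1 ((iInf₂_le c hc).trans (by simp))
  have hfA : 6 ≤ ∑ a ∈ A, f a := by
    have hA : A.card = 2 := by
      rw [Finset.card_erase_of_mem hxy', G.card_neighborFinset_eq_degree, hreg x]
    have h3 : ∀ a ∈ A, (3 : ℝ≥0∞) ≤ f a := fun a ha => le_iInf₂ fun c hc => by
      obtain ⟨hay, hxa⟩ := Finset.mem_erase.1 ha
      obtain ⟨hcx, hyc⟩ := Finset.mem_erase.1 hc
      exact_mod_cast G.three_le_dist_of_six_le_egirth hg hxy ((G.mem_neighborFinset _ _).1 hxa)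
        ((G.mem_neighborFinset _ _).1 hyc) hay hcx
    calc (6 : ℝ≥0∞) = A.card • 3 := by rw [hA]; norm_num
      _ ≤ ∑ a ∈ A, f a := Finset.card_nsmul_le_sum _ _ _ h3
  have hdual := tsum_mul_le_tsum_mul_add_W1 G (μ₁ := muMeasure G (1 / 4) x)
    (μ₂ := muMeasure G (1 / 4) y) f fun u v hu hv =>
    ((reachable_of_muMeasure_ne_zero hu).symm.trans
      (hxy.reachable.trans (reachable_of_muMeasure_ne_zero hv))).biInf_dist_le _
  rw [tsum_mul_muMeasure_quarter (hreg x), tsum_mul_muMeasure_quarter (hreg y),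
    ← Finset.add_sum_erase _ _ hxy', ← Finset.add_sum_erase _ _ hyx, hfS, add_zero,
    add_comm (f y) (f x)] at hdual
  have h64 : (f x + f y) / 4 + 6 / 4 ≤
      (f x + f y) / 4 + W1 G (muMeasure G (1 / 4) x) (muMeasure G (1 / 4) y) := by
    grw [← ENNReal.add_div, hfA, add_assoc]
    exact hdual
  calc (3 : ℝ≥0∞) / 2 = 6 / 4 := by
        rw [ENNReal.div_eq_div_iff (by norm_num) (by norm_num) (by norm_num) (by norm_num)]
        norm_num
    _ ≤ _ := (ENNReal.add_le_add_iff_left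
        (ENNReal.div_ne_top (ENNReal.add_ne_top.2 ⟨hf_ne_top x, hf_ne_top y⟩) four_ne_zero)).1 h64

theorem egirth_eq_five {V : Type*} [Nonempty V] (G : SimpleGraph V) [G.LocallyFinite]
    (hreg : G.IsRegularOfDegree 3) (hgirth : 5 ≤ G.egirth)
    (hflat : ∀ x y : V, G.Adj x y →
      W1 G (muMeasure G (1/4) x) (muMeasure G (1/4) y) = 1) :
    G.egirth = 5 := by
  refine le_antisymm (not_lt.1 fun h5 => ?_) hgirth
  obtain ⟨x⟩ := ‹Nonempty V›
  obtain ⟨y, hy⟩ : (G.neighborFinset x).Nonempty := by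
    rw [← Finset.card_pos, G.card_neighborFinset_eq_degree, hreg x]
    norm_num
  have hxy : G.Adj x y := (G.mem_neighborFinset x y).1 hy
  have h6 : 6 ≤ G.egirth := Order.add_one_le_of_lt h5
  have hW := three_div_two_le_W1 hreg h6 hxy
  rw [hflat x y hxy, ENNReal.div_le_iff (by norm_num) (by norm_num)] at hW
  norm_num at hW

end RicciFlatCubic
end

section
/- Every edge xy of the Petersen graph satisfies W_1(μ_x^{1/4}, μ_y^{1/4}) = 1, i.e. κ_{1/4}(x,y) = 0; hence the Petersen graph is Ricci-flat. -/
open scoped ENNReal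

namespace RicciFlatCubic

variable {V : Type*}

/-! Write `a, b` and `c, d` for the neighbours of `x` other than `y` and of `y` other than `x`.
With idleness `1/4` at a cubic vertex, `μ_x` and `μ_y` are uniform on `{x, y, a, b}` and
`{x, y, c, d}`. In the Petersen graph `a c` and `b d` lie on pentagons through `xy`, so the plan
fixing `x, y` and sending `a ↦ c`, `b ↦ d` costs `(2 + 2) / 4 = 1`. Conversely the 1-Lipschitz
function `v ↦ d(v, {a, b})` is `1, 2, 2, 2` on `x, y, c, d` and `1, 2, 0, 0` on `x, y, a, b`, so
Kantorovich duality gives `W₁ ≥ (7 - 3) / 4 = 1`. The permutations of `Fin 5` act transitively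
on the oriented edges, so the configuration only has to be checked at one edge. -/

section Transport

variable {G : SimpleGraph V} {μ₁ μ₂ : V → ℝ≥0∞}

theorem W1_le_tsum_of_equiv (e : V ≃ V) (hle : ∀ u, μ₁ u ≤ 1) (he : ∀ u, μ₂ (e u) = μ₁ u) :
    W1 G μ₁ μ₂ ≤ ∑' u, (G.dist u (e u) : ℝ≥0∞) * μ₁ u := by
  classical
  let π : V → V → ℝ≥0∞ := fun u v => if v = e u then μ₁ u else 0
  have hπ : IsTransportPlan μ₁ μ₂ π := by
    refine ⟨fun u v => ?_, fun u => tsum_ite_eq _ _, fun v => ?_⟩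
    · by_cases h : v = e u <;> simp [π, h, hle u]
    · calc ∑' u, π u v = ∑' u, if u = e.symm v then μ₁ u else 0 :=
            tsum_congr fun u => by simp [π, Equiv.eq_symm_apply, eq_comm]
        _ = μ₂ v := by rw [tsum_ite_eq, ← he, e.apply_symm_apply]
  refine (iInf_le _ (⟨π, hπ⟩ : {π // IsTransportPlan μ₁ μ₂ π})).trans_eq ?_
  change ∑' q : V × V, (G.dist q.1 q.2 : ℝ≥0∞) * π q.1 q.2 = _
  rw [ENNReal.tsum_prod (f := fun u v => (G.dist u v : ℝ≥0∞) * π u v)]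
  simp_rw [π, mul_ite, mul_zero]
  exact tsum_congr fun u => tsum_ite_eq _ _

theorem tsum_mul_le_W1_add {f : V → ℝ≥0∞} (hf : ∀ u v, f v ≤ G.dist u v + f u) :
    ∑' v, f v * μ₂ v ≤ W1 G μ₁ μ₂ + ∑' u, f u * μ₁ u := by
  rw [W1, ENNReal.iInf_add]
  refine le_iInf ?_
  rintro ⟨π, -, hrow, hcol⟩
  calc ∑' v, f v * μ₂ v = ∑' q : V × V, f q.2 * π q.1 q.2 := by
        rw [ENNReal.tsum_prod (f := fun u v => f v * π u v), ENNReal.tsum_comm]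
        simp_rw [ENNReal.tsum_mul_left, hcol]
    _ ≤ ∑' q : V × V, ((G.dist q.1 q.2 : ℝ≥0∞) + f q.1) * π q.1 q.2 :=
        ENNReal.tsum_le_tsum fun q => mul_le_mul_left (hf q.1 q.2) _
    _ = ∑' q : V × V, (G.dist q.1 q.2 : ℝ≥0∞) * π q.1 q.2 + ∑' u, f u * μ₁ u := by
        simp_rw [add_mul]
        rw [ENNReal.tsum_add, ENNReal.tsum_prod (f := fun u v => f u * π u v)]
        simp_rw [ENNReal.tsum_mul_left, hrow]

end Transport

theorem tsum_mul_indicator_const (s : Finset V) (f : V → ℝ≥0∞) (c : ℝ≥0∞) :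
    ∑' u, f u * (s : Set V).indicator (fun _ => c) u = (∑ u ∈ s, f u) * c := by
  simp_rw [← Set.indicator_mul_right, ← sum_eq_tsum_indicator, Finset.sum_mul]

theorem W1_indicator_le_of_map [DecidableEq V] (G : SimpleGraph V) (s : Finset V) (e : V ≃ V)
    {c : ℝ≥0∞} (hc : c ≤ 1) :
    W1 G ((s : Set V).indicator fun _ => c) ((s.map e.toEmbedding : Set V).indicator fun _ => c) ≤
      (∑ u ∈ s, (G.dist u (e u) : ℝ≥0∞)) * c := by
  rw [← tsum_mul_indicator_const]
  refine W1_le_tsum_of_equiv e (fun u => Set.indicator_apply_le' (fun _ => hc) fun _ => zero_le)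
    fun u => ?_
  simp only [Set.indicator_apply, Finset.mem_coe, Finset.mem_map_equiv, Equiv.symm_apply_apply]

theorem min_dist_le_dist_add {G : SimpleGraph V} (hG : G.Connected) (a b u v : V) :
    min (G.dist a v) (G.dist b v) ≤ G.dist u v + min (G.dist a u) (G.dist b u) := by
  have := hG.dist_triangle (u := a) (v := u) (w := v)
  have := hG.dist_triangle (u := b) (v := u) (w := v)
  omega

theorem muMeasure_quarter_eq_indicator [DecidableEq V] {G : SimpleGraph V} [G.LocallyFinite]
    {x y a b : V} (hx : ∀ z, G.Adj x z ↔ z = y ∨ z = a ∨ z = b)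
    (hya : y ≠ a) (hyb : y ≠ b) (hab : a ≠ b) :
    muMeasure G (1/4) x = (↑({x, y, a, b} : Finset V) : Set V).indicator fun _ => 4⁻¹ := by
  have hdeg : G.degree x = 3 := by
    rw [← SimpleGraph.card_neighborFinset_eq_degree, Finset.card_eq_three]
    exact ⟨y, a, b, hya, hyb, hab, by ext; simp [hx]⟩
  have hquarter : (1 - 4⁻¹ : ℝ≥0∞) / 3 = 4⁻¹ := by
    rw [show (4⁻¹ : ℝ≥0∞) = ENNReal.ofReal 4⁻¹ by simp, ← ENNReal.ofReal_one,
      ← ENNReal.ofReal_sub _ (by norm_num), ← ENNReal.ofReal_ofNat 3,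
      ← ENNReal.ofReal_div_of_pos three_pos]
    norm_num
  ext z
  by_cases hzx : z = x
  · simp [muMeasure, hzx]
  · have := hx z
    by_cases hadj : G.Adj x z <;> simp_all [muMeasure]

theorem sum_four_of_nodup [DecidableEq V] {M : Type*} [AddCommMonoid M] {u v w z : V}
    (h : [u, v, w, z].Nodup) (g : V → M) : ∑ i ∈ {u, v, w, z}, g i = g u + g v + g w + g z := by
  simp only [List.nodup_cons, List.mem_cons, List.not_mem_nil, not_or] at h
  obtain ⟨⟨huv, huw, huz, -⟩, ⟨hvw, hvz, -⟩, ⟨hwz, -⟩, -⟩ := h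
  rw [Finset.sum_insert (by simp [huv, huw, huz]), Finset.sum_insert (by simp [hvw, hvz]),
    Finset.sum_pair hwz, add_assoc, add_assoc]

theorem W1_indicator_le_one [DecidableEq V] (G : SimpleGraph V) {x y a b c d : V}
    (hne : [x, y, a, b, c, d].Nodup) (hac : G.dist a c = 2) (hbd : G.dist b d = 2) :
    W1 G ((↑({x, y, a, b} : Finset V) : Set V).indicator fun _ => 4⁻¹)
      ((↑({x, y, c, d} : Finset V) : Set V).indicator fun _ => 4⁻¹) ≤ 1 := by
  have hsum := sum_four_of_nodup (M := ℝ≥0∞) (hne.sublist (List.sublist_append_left _ [c, d]))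
  simp only [List.nodup_cons, List.mem_cons, List.not_mem_nil, not_or] at hne
  obtain ⟨⟨-, hxa, hxb, hxc, hxd, -⟩, ⟨hya, hyb, hyc, hyd, -⟩, ⟨hab, -, had, -⟩, -, ⟨hcd, -⟩, -⟩ :=
    hne
  let e := Equiv.swap a c * Equiv.swap b d
  obtain ⟨hex, hey, hea, heb⟩ : e x = x ∧ e y = y ∧ e a = c ∧ e b = d := by
    simp [e, Equiv.swap_apply_of_ne_of_ne, hxa, hxb, hxc, hxd, hya, hyb, hyc, hyd, hab, had,
      Ne.symm had, Ne.symm hcd]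
  have hmap : ({x, y, a, b} : Finset V).map e.toEmbedding = {x, y, c, d} := by
    simp [hex, hey, hea, heb]
  calc _ ≤ (∑ u ∈ {x, y, a, b}, (G.dist u (e u) : ℝ≥0∞)) * 4⁻¹ :=
        hmap ▸ W1_indicator_le_of_map G _ e (ENNReal.inv_le_one.2 (by norm_num))
    _ = (0 + 0 + 2 + 2) * 4⁻¹ := by
      rw [hsum, hex, hey, hea, heb, SimpleGraph.dist_self, SimpleGraph.dist_self, hac, hbd]
      norm_num
    _ = 1 := by
      rw [zero_add, zero_add, two_add_two_eq_four]
      exact ENNReal.mul_inv_cancel (by norm_num) (by norm_num)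

theorem one_le_W1_indicator [DecidableEq V] {G : SimpleGraph V} (hG : G.Connected)
    {x y a b c d : V} (hne : [x, y, a, b, c, d].Nodup) (hxa : G.Adj x a) (hxb : G.Adj x b)
    (hay : G.dist a y = 2) (hby : G.dist b y = 2) (hac : G.dist a c = 2)
    (hbc : G.dist b c = 2) (had : G.dist a d = 2) (hbd : G.dist b d = 2) :
    1 ≤ W1 G ((↑({x, y, a, b} : Finset V) : Set V).indicator fun _ => 4⁻¹)
      ((↑({x, y, c, d} : Finset V) : Set V).indicator fun _ => 4⁻¹) := by
  let f : V → ℝ≥0∞ := fun v => (min (G.dist a v) (G.dist b v) : ℕ)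
  have key := tsum_mul_le_W1_add (G := G) (f := f)
    (μ₁ := (↑({x, y, a, b} : Finset V) : Set V).indicator fun _ => 4⁻¹)
    (μ₂ := (↑({x, y, c, d} : Finset V) : Set V).indicator fun _ => 4⁻¹)
    fun u v => by simp only [f]; exact_mod_cast min_dist_le_dist_add hG a b u v
  rw [tsum_mul_indicator_const, tsum_mul_indicator_const,
    sum_four_of_nodup (hne.sublist (List.sublist_append_left _ [c, d])),
    sum_four_of_nodup (hne.sublist (.cons_cons x (.cons_cons y (.cons a (.cons b (.refl _))))))]
    at key
  simp only [f, SimpleGraph.dist_eq_one_iff_adj.2 hxa.symm,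
    SimpleGraph.dist_eq_one_iff_adj.2 hxb.symm, hay, hby, hac, hbc, had, hbd, SimpleGraph.dist_self,
    SimpleGraph.dist_comm (u := b) (v := a), min_self, zero_le, inf_of_le_left, inf_of_le_right,
    Nat.cast_zero, Nat.cast_one, Nat.cast_ofNat, add_zero] at key
  have h : (1 + 2 + 2 + 2 : ℝ≥0∞) * 4⁻¹ = 1 + (1 + 2) * 4⁻¹ := by
    rw [show (1 + 2 + 2 + 2 : ℝ≥0∞) = 4 + (1 + 2) by norm_num, add_mul,
      ENNReal.mul_inv_cancel (by norm_num) (by norm_num)]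
  exact ENNReal.le_of_add_le_add_right (ENNReal.mul_ne_top (by norm_num) (by norm_num)) (h ▸ key)

theorem W1_quarter_eq_one_of_pentagons {G : SimpleGraph V} [G.LocallyFinite] (hG : G.Connected)
    {x y a b c d : V} (hx : ∀ z, G.Adj x z ↔ z = y ∨ z = a ∨ z = b)
    (hy : ∀ z, G.Adj y z ↔ z = x ∨ z = c ∨ z = d) (hab : a ≠ b) (hcd : c ≠ d)
    (hay : G.dist a y = 2) (hby : G.dist b y = 2) (hac : G.dist a c = 2)
    (hbc : G.dist b c = 2) (had : G.dist a d = 2) (hbd : G.dist b d = 2) :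
    W1 G (muMeasure G (1/4) x) (muMeasure G (1/4) y) = 1 := by
  classical
  have hxa : G.Adj x a := (hx a).2 (by simp)
  have hxb : G.Adj x b := (hx b).2 (by simp)
  have hyx : G.Adj y x := (hy x).2 (by simp)
  have hyc : G.Adj y c := (hy c).2 (by simp)
  have hyd : G.Adj y d := (hy d).2 (by simp)
  have ne_of_dist : ∀ {u v : V}, G.dist u v = 2 → u ≠ v := by
    rintro u v h rfl
    simp at h
  have hax : G.dist a x = 1 := SimpleGraph.dist_eq_one_iff_adj.2 hxa.symm
  have hxc : x ≠ c := by rintro rfl; omega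
  have hxd : x ≠ d := by rintro rfl; omega
  have hne : [x, y, a, b, c, d].Nodup := by
    simp [hyx.ne', hxa.ne, hxb.ne, hxc, hxd, (ne_of_dist hay).symm, (ne_of_dist hby).symm,
      hyc.ne, hyd.ne, hab, ne_of_dist hac, ne_of_dist had, ne_of_dist hbc, ne_of_dist hbd, hcd]
  rw [muMeasure_quarter_eq_indicator hx (ne_of_dist hay).symm (ne_of_dist hby).symm hab,
    muMeasure_quarter_eq_indicator hy hxc hxd hcd, Finset.insert_comm y x]
  exact le_antisymm (W1_indicator_le_one G hne hac hbd)
    (one_le_W1_indicator hG hne hxa hxb hay hby hac hbc had hbd)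

instance : DecidableRel petersen.Adj := fun u v => inferInstanceAs (Decidable (Disjoint u.1 v.1))

theorem petersen_exists_adj_adj :
    ∀ u v : {s : Finset (Fin 5) // s.card = 2}, u ≠ v → ¬ petersen.Adj u v →
      ∃ w, petersen.Adj u w ∧ petersen.Adj w v := by
  decide

theorem petersen_dist_eq_two {u v : {s : Finset (Fin 5) // s.card = 2}} (hne : u ≠ v)
    (hadj : ¬ petersen.Adj u v) : petersen.dist u v = 2 := by
  obtain ⟨w, huw, hwv⟩ := petersen_exists_adj_adj u v hne hadj
  have hle := SimpleGraph.dist_le (huw.toWalk.append hwv.toWalk)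
  have hlt := (huw.reachable.trans hwv.reachable).one_lt_dist_of_ne_of_not_adj hne hadj
  simp only [SimpleGraph.Walk.length_append, SimpleGraph.Adj.length_toWalk] at hle
  omega

theorem petersen_connected : petersen.Connected := by
  have : Nonempty {s : Finset (Fin 5) // s.card = 2} := ⟨⟨{0, 1}, rfl⟩⟩
  refine ⟨fun u v => ?_⟩
  by_cases hne : u = v
  · exact hne ▸ .refl u
  by_cases hadj : petersen.Adj u v
  · exact hadj.reachable
  obtain ⟨w, huw, hwv⟩ := petersen_exists_adj_adj u v hne hadj
  exact huw.reachable.trans hwv.reachable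

def petersenRelabel (σ : Equiv.Perm (Fin 5)) : petersen ≃g petersen where
  toFun u := ⟨u.1.map σ.toEmbedding, (Finset.card_map _).trans u.2⟩
  invFun u := ⟨u.1.map σ.symm.toEmbedding, (Finset.card_map _).trans u.2⟩
  left_inv u := Subtype.ext (by simp [Finset.map_map])
  right_inv u := Subtype.ext (by simp [Finset.map_map])
  map_rel_iff' := Finset.disjoint_map _

set_option maxRecDepth 10000 in
theorem petersen_exists_petersenRelabel_edge :
    ∀ x y : {s : Finset (Fin 5) // s.card = 2}, petersen.Adj x y →
      ∃ σ, petersenRelabel σ ⟨{0, 1}, rfl⟩ = x ∧ petersenRelabel σ ⟨{2, 3}, rfl⟩ = y := by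
  decide

theorem petersen_ricciFlat (x y : {s : Finset (Fin 5) // s.card = 2}) (hxy : petersen.Adj x y) :
    W1 petersen (muMeasure petersen (1/4) x) (muMeasure petersen (1/4) y) = 1 := by
  obtain ⟨σ, rfl, rfl⟩ := petersen_exists_petersenRelabel_edge x y hxy
  set φ := petersenRelabel σ
  have hadj : ∀ {u v w₁ w₂}, (∀ z, petersen.Adj u z ↔ z = v ∨ z = w₁ ∨ z = w₂) →
      ∀ z, petersen.Adj (φ u) z ↔ z = φ v ∨ z = φ w₁ ∨ z = φ w₂ := by
    intro u v w₁ w₂ h z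
    obtain ⟨z, rfl⟩ := φ.surjective z
    simp only [φ.map_adj_iff, φ.injective.eq_iff, h]
  have hdist : ∀ {u v}, u ≠ v ∧ ¬ petersen.Adj u v → petersen.dist (φ u) (φ v) = 2 :=
    fun ⟨hne, hn⟩ => petersen_dist_eq_two (φ.injective.ne hne) (by rwa [φ.map_adj_iff])
  exact W1_quarter_eq_one_of_pentagons petersen_connected
    (a := φ ⟨{2, 4}, rfl⟩) (b := φ ⟨{3, 4}, rfl⟩) (c := φ ⟨{0, 4}, rfl⟩) (d := φ ⟨{1, 4}, rfl⟩)
    (hadj (by decide)) (hadj (by decide)) (φ.injective.ne (by decide))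
    (φ.injective.ne (by decide)) (hdist (by decide)) (hdist (by decide)) (hdist (by decide))
    (hdist (by decide)) (hdist (by decide)) (hdist (by decide))

end RicciFlatCubic
end
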